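/- arXiv:1701.06539 — 6 statements merged into one kernel-verified Lean document; each statement's English description precedes it below -/
import Mathlib

section
/- If a scoring method satisfies symmetry (SYM) and strong order preservation (SOP), then it satisfies inversion (INV). -/
open Finset

/-- A ranking problem: skew-symmetric results matrix `R`, symmetric
nonnegative-integer matches matrix `M`, with `|R i j| ≤ M i j`. -/
structure RP (n : ℕ) where
  R : Fin n → Fin n → ℝ
  M : Fin n → Fin n → ℕ
  skew : ∀ i j, R j i = - R i j
  symm : ∀ i j, M j i = M i j
  bound : ∀ i j, |R i j| ≤ (M i j : ℝ)

/-- Sum of two ranking problems. -/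
def RP.add {n : ℕ} (P Q : RP n) : RP n where
  R i j := P.R i j + Q.R i j
  M i j := P.M i j + Q.M i j
  skew i j := by rw [P.skew i j, Q.skew i j]; ring
  symm i j := by rw [P.symm i j, Q.symm i j]
  bound i j := by
    calc |P.R i j + Q.R i j| ≤ |P.R i j| + |Q.R i j| := abs_add_le _ _
      _ ≤ (P.M i j : ℝ) + (Q.M i j : ℝ) := add_le_add (P.bound i j) (Q.bound i j)
      _ = ((P.M i j + Q.M i j : ℕ) : ℝ) := by push_cast; ring

/-- The ranking problem with all results reversed. -/
def RP.neg {n : ℕ} (P : RP n) : RP n where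
  R i j := - P.R i j
  M := P.M
  skew i j := by rw [P.skew i j]
  symm := P.symm
  bound i j := by simpa using P.bound i j

/-- Relabelling the players by a permutation. -/
def RP.relabel {n : ℕ} (σ : Equiv.Perm (Fin n)) (P : RP n) : RP n where
  R i j := P.R (σ.symm i) (σ.symm j)
  M i j := P.M (σ.symm i) (σ.symm j)
  skew i j := P.skew _ _
  symm i j := P.symm _ _
  bound i j := P.bound _ _

/-- All players have played `m` matches. -/
def RPBalanced {n : ℕ} (P : RP n) (m : ℕ) : Prop := ∀ i, ∑ j, P.M i j = m

/-- Symmetry (SYM): if all results are draws, all scores are equal. -/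
def SYM {n : ℕ} (f : RP n → Fin n → ℝ) : Prop :=
  ∀ P : RP n, (∀ i j, P.R i j = 0) → ∀ i j, f P i = f P j

/-- Inversion (INV). -/
def INV {n : ℕ} (f : RP n → Fin n → ℝ) : Prop :=
  ∀ P : RP n, ∀ i j, f P i ≥ f P j ↔ f P.neg i ≤ f P.neg j

/-- Order preservation (OP). -/
def OP {n : ℕ} (f : RP n → Fin n → ℝ) : Prop :=
  ∀ P Q : RP n, ∀ m m' : ℕ, RPBalanced P m → RPBalanced Q m' →
    ∀ i j, f P i ≥ f P j → f Q i ≥ f Q j →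
      f (P.add Q) i ≥ f (P.add Q) j ∧
      ((f P i > f P j ∨ f Q i > f Q j) → f (P.add Q) i > f (P.add Q) j)

/-- Strong order preservation (SOP). -/
def SOP {n : ℕ} (f : RP n → Fin n → ℝ) : Prop :=
  ∀ P Q : RP n, ∀ i j, f P i ≥ f P j → f Q i ≥ f Q j →
      f (P.add Q) i ≥ f (P.add Q) j ∧
      ((f P i > f P j ∨ f Q i > f Q j) → f (P.add Q) i > f (P.add Q) j)

/-- Neutrality (NEU). -/
def NEU {n : ℕ} (f : RP n → Fin n → ℝ) : Prop :=
  ∀ σ : Equiv.Perm (Fin n), ∀ P : RP n, ∀ i, f P i = f (P.relabel σ) (σ i)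

/-- Independence of irrelevant matches (IIM). -/
def IIM {n : ℕ} (f : RP n → Fin n → ℝ) : Prop :=
  ∀ P Q : RP n, ∀ i j k l : Fin n,
    i ≠ k → i ≠ l → j ≠ k → j ≠ l → i ≠ j → k ≠ l →
    (∀ a b, ¬((a = k ∧ b = l) ∨ (a = l ∧ b = k)) → P.R a b = Q.R a b ∧ P.M a b = Q.M a b) →
    f P i ≥ f P j → f Q i ≥ f Q j

/-- A decomposition of a ranking problem into per-match results:
match `t` between `a` and `b` (for `t < M a b`) has result `res a b t ∈ [-1,1]`,
and the results sum to `R a b`. -/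
structure RP.Decomp {n : ℕ} (P : RP n) where
  res : Fin n → Fin n → ℕ → ℝ
  skew : ∀ a b t, res b a t = - res a b t
  bound : ∀ a b t, t < P.M a b → |res a b t| ≤ 1
  sum : ∀ a b, ∑ t ∈ Finset.range (P.M a b), res a b t = P.R a b

/-- The opponent multiset of player `i`: `M i k` copies of each `k`. -/
def RP.Matches {n : ℕ} (P : RP n) (i : Fin n) := Σ k : Fin n, Fin (P.M i k)

/-- Self-consistency (SC): if there is a bijection between the opponent
multisets of `i` and `j` matching each match of `i` to a match of `j` with a
weakly smaller per-match result against a weakly weaker opponent, then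
`f i ≥ f j`, strictly if some comparison is strict. -/
def SC {n : ℕ} (f : RP n → Fin n → ℝ) : Prop :=
  ∀ P : RP n, ∀ d : P.Decomp, ∀ i j : Fin n, ∀ e : P.Matches i ≃ P.Matches j,
    (∀ m : P.Matches i,
      d.res i m.1 m.2.1 ≥ d.res j (e m).1 (e m).2.1 ∧ f P m.1 ≥ f P (e m).1) →
    f P i ≥ f P j ∧
    ((∃ m : P.Matches i,
        d.res i m.1 m.2.1 > d.res j (e m).1 (e m).2.1 ∨ f P m.1 > f P (e m).1) →
      f P i > f P j)

namespace SOP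

variable {n : ℕ} {f : RP n → Fin n → ℝ} {P Q : RP n} {i j : Fin n}

theorem lt_add_of_lt_of_le (hf : SOP f) (hP : f P j < f P i) (hQ : f Q j ≤ f Q i) :
    f (P.add Q) j < f (P.add Q) i :=
  (hf P Q i j hP.le hQ).2 (Or.inl hP)

theorem lt_add_of_le_of_lt (hf : SOP f) (hP : f P j ≤ f P i) (hQ : f Q j < f Q i) :
    f (P.add Q) j < f (P.add Q) i :=
  (hf P Q i j hP hQ.le).2 (Or.inr hQ)

end SOP

theorem RP.add_neg_R {n : ℕ} (P : RP n) (a b : Fin n) : (P.add P.neg).R a b = 0 :=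
  add_neg_cancel (P.R a b)

theorem sym_sop_implies_inv {n : ℕ} (f : RP n → Fin n → ℝ)
    (hSym : SYM f) (hSOP : SOP f) : INV f := by
  intro P i j
  -- `P` and its inversion add up to a problem of draws only, where `i` and `j` tie; by SOP,
  -- a ranking of `i` and `j` in `P` agreeing with the one in `P.neg`, strict in either, would
  -- survive in the sum.
  have htie : f (P.add P.neg) i = f (P.add P.neg) j := hSym _ P.add_neg_R i j
  constructor
  · exact fun hP => le_of_not_gt fun hN => (hSOP.lt_add_of_le_of_lt hP hN).ne' htie
  · exact fun hN => le_of_not_gt fun hP => (hSOP.lt_add_of_lt_of_le hP hN).ne htie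
end

section
/- Any scoring method satisfying neutrality (NEU), symmetry (SYM), and strong order preservation (SOP) also satisfies independence of irrelevant matches (IIM). -/
open Finset

/-!
Let `P|_{kl}` keep only the matches between `k` and `l`. If `P` and `Q` agree off the pair
`{k, l}`, then `P + Q|_{kl} = Q + P|_{kl}`. Since `i, j ∉ {k, l}`, the transposition of `i` and
`j` leaves every `P|_{kl}` unchanged, so by neutrality `i` and `j` tie in it. Strong order
preservation then carries `i ≥ j` from `P` to `P + Q|_{kl}`, while a strict `j > i` in `Q` would
carry over to `Q + P|_{kl}`, the same problem.
-/

namespace RP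

variable {n : ℕ}

lemma ext {P Q : RP n} (hR : P.R = Q.R) (hM : P.M = Q.M) : P = Q := by
  cases P; cases Q; simp_all

def restrict (P : RP n) (k l : Fin n) : RP n where
  R a b := if s(a, b) = s(k, l) then P.R a b else 0
  M a b := if s(a, b) = s(k, l) then P.M a b else 0
  skew a b := by rw [Sym2.eq_swap]; split_ifs <;> simp [P.skew a b]
  symm a b := by rw [Sym2.eq_swap]; split_ifs <;> simp [P.symm a b]
  bound a b := by split_ifs <;> simp [P.bound a b]

lemma add_restrict_comm {P Q : RP n} {k l : Fin n}
    (hPQ : ∀ a b, s(a, b) ≠ s(k, l) → P.R a b = Q.R a b ∧ P.M a b = Q.M a b) :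
    P.add (Q.restrict k l) = Q.add (P.restrict k l) := by
  refine ext (funext₂ fun a b => ?_) (funext₂ fun a b => ?_) <;>
    by_cases h : s(a, b) = s(k, l) <;> simp only [add, restrict, h, if_true, if_false]
  · ring
  · rw [(hPQ a b h).1]
  · ring
  · rw [(hPQ a b h).2]

lemma relabel_restrict {σ : Equiv.Perm (Fin n)} {k l : Fin n} (hk : σ k = k) (hl : σ l = l)
    (P : RP n) : (P.restrict k l).relabel σ = P.restrict k l := by
  have hk' : σ.symm k = k := σ.symm_apply_eq.mpr hk.symm
  have hl' : σ.symm l = l := σ.symm_apply_eq.mpr hl.symm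
  have hpair : ∀ a b, s(σ.symm a, σ.symm b) = s(k, l) ↔ s(a, b) = s(k, l) := fun a b => by
    conv_lhs => rw [← hk', ← hl']
    simpa only [Sym2.map_mk] using
      (Sym2.map.injective σ.symm.injective).eq_iff (a := s(a, b)) (b := s(k, l))
  refine ext (funext₂ fun a b => ?_) (funext₂ fun a b => ?_) <;>
    simp only [relabel, restrict, hpair] <;> split_ifs with h <;> try rfl
  all_goals
    rcases Sym2.eq_iff.mp h with ⟨rfl, rfl⟩ | ⟨rfl, rfl⟩ <;> simp only [hk', hl']

end RP

variable {n : ℕ} {f : RP n → Fin n → ℝ}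

lemma NEU.apply_eq_of_relabel_eq (hNeu : NEU f) {σ : Equiv.Perm (Fin n)} {P : RP n}
    (hP : P.relabel σ = P) (i : Fin n) : f P (σ i) = f P i := by
  rw [hNeu σ P i, hP]

lemma NEU.restrict_apply_eq (hNeu : NEU f) (P : RP n) {i j k l : Fin n}
    (hik : i ≠ k) (hil : i ≠ l) (hjk : j ≠ k) (hjl : j ≠ l) :
    f (P.restrict k l) i = f (P.restrict k l) j := by
  have h := hNeu.apply_eq_of_relabel_eq
    (RP.relabel_restrict (Equiv.swap_apply_of_ne_of_ne hik.symm hjk.symm)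
      (Equiv.swap_apply_of_ne_of_ne hil.symm hjl.symm) P) i
  rwa [Equiv.swap_apply_left, eq_comm] at h

lemma SOP.le_of_add_eq_add (hSOP : SOP f) {P Q D D' : RP n} {i j : Fin n}
    (hD : f D i = f D j) (hD' : f D' i = f D' j) (hadd : P.add D = Q.add D')
    (hP : f P i ≥ f P j) : f Q i ≥ f Q j := by
  by_contra! hQ
  have h₁ := (hSOP P D i j hP hD.ge).1
  have h₂ := (hSOP Q D' j i hQ.le hD'.le).2 (Or.inl hQ)
  rw [hadd] at h₁
  exact h₁.not_gt h₂

theorem neu_sym_sop_implies_iim_general {n : ℕ} (f : RP n → Fin n → ℝ)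
    (hNeu : NEU f) (hSOP : SOP f) : IIM f := by
  intro P Q i j k l hik hil hjk hjl _ _ hPQ
  have hoff : ∀ a b, s(a, b) ≠ s(k, l) → P.R a b = Q.R a b ∧ P.M a b = Q.M a b :=
    fun a b h => hPQ a b (Sym2.eq_iff.not.mp h)
  exact hSOP.le_of_add_eq_add (hNeu.restrict_apply_eq Q hik hil hjk hjl)
    (hNeu.restrict_apply_eq P hik hil hjk hjl) (RP.add_restrict_comm hoff)

theorem neu_sym_sop_implies_iim {n : ℕ} (hn : 4 ≤ n) (f : RP n → Fin n → ℝ)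
    (hNeu : NEU f) (hSym : SYM f) (hSOP : SOP f) : IIM f :=
  neu_sym_sop_implies_iim_general f hNeu hSOP
end

section
/- The scoring method f defined by f_i(R,M) = Σ_j r_{i-1,j} for i ≥ 2 and f_1(R,M) = Σ_j r_{n,j} (the sum of results of the 'previous' player, cyclically) satisfies symmetry (SYM) and strong order preservation (SOP), but violates neutrality (NEU) and independence of irrelevant matches (IIM). -/
/-!
Writing `s_i = ∑_j r_ij` for the score of `X_i`, the method is `f_i = s_{i-1}`. It is additive in
the ranking problem, which gives SOP, and it vanishes when all results are draws, which gives SYM.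
But it credits `X_{i+1}` with the results of `X_i`. So a single match between `X_k` and `X_l` decides
the order of the uninvolved `X_{k+1}` and `X_{l+1}` according to who wins it (against IIM); and after
a single match between `X_x` and `X_{x+1}`, exchanging the labels of `X_{x+1}` and `X_{x+2}` moves
`X_{x+1}` to a position credited with the results of an idle player (against NEU).
-/

open Finset

/-- The sum of the results of the (cyclically) previous player. -/
noncomputable def prevSum (n : ℕ) [NeZero n] : RP n → Fin n → ℝ :=
  fun P i => ∑ j, P.R (i - 1) j

namespace RP

variable {n : ℕ}

def score (P : RP n) (i : Fin n) : ℝ := ∑ j, P.R i j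

theorem score_add (P Q : RP n) (i : Fin n) : (P.add Q).score i = P.score i + Q.score i :=
  Finset.sum_add_distrib

theorem score_relabel (σ : Equiv.Perm (Fin n)) (P : RP n) (i : Fin n) :
    (P.relabel σ).score i = P.score (σ.symm i) :=
  Equiv.sum_comp σ.symm (P.R (σ.symm i))

def single (x y : Fin n) (hxy : x ≠ y) (c : ℝ) (hc : |c| ≤ 1) : RP n where
  R a b := if a = x ∧ b = y then c else if a = y ∧ b = x then -c else 0
  M a b := if (a = x ∧ b = y) ∨ (a = y ∧ b = x) then 1 else 0
  skew a b := by split_ifs <;> simp_all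
  symm a b := by grind
  bound a b := by split_ifs <;> simp_all

section single

variable {x y : Fin n} (hxy : x ≠ y) {c : ℝ} (hc : |c| ≤ 1)

theorem score_single_left : (single x y hxy c hc).score x = c := by
  simp [score, single, hxy]

theorem score_single_right : (single x y hxy c hc).score y = -c := by
  simp [score, single, hxy.symm]

theorem score_single_of_ne {z : Fin n} (hzx : z ≠ x) (hzy : z ≠ y) :
    (single x y hxy c hc).score z = 0 := by
  simp [score, single, hzx, hzy]

theorem single_agree_off_match {c' : ℝ} (hc' : |c'| ≤ 1) {a b : Fin n}
    (hab : ¬((a = x ∧ b = y) ∨ (a = y ∧ b = x))) :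
    (single x y hxy c hc).R a b = (single x y hxy c' hc').R a b ∧
      (single x y hxy c hc).M a b = (single x y hxy c' hc').M a b := by
  simp only [single, if_neg hab]
  grind

end single

end RP

theorem SOP_of_additive {n : ℕ} {f : RP n → Fin n → ℝ}
    (hf : ∀ P Q i, f (P.add Q) i = f P i + f Q i) : SOP f := by
  intro P Q i j hP hQ
  rw [hf, hf]
  exact ⟨add_le_add hP hQ,
    fun h => h.elim (add_lt_add_of_lt_of_le · hQ) (add_lt_add_of_le_of_lt hP)⟩

section prevSum

variable {n : ℕ} [NeZero n]

theorem prevSum_add_one (P : RP n) (i : Fin n) : prevSum n P (i + 1) = P.score i := by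
  simp [prevSum, RP.score]

theorem prevSum_add (P Q : RP n) (i : Fin n) :
    prevSum n (P.add Q) i = prevSum n P i + prevSum n Q i :=
  RP.score_add P Q (i - 1)

theorem prevSum_SYM : SYM (prevSum n) := by
  intro P hP i j
  simp [prevSum, hP]

theorem prevSum_not_NEU {x : Fin n} (h₁ : x + 1 ≠ x) (h₂ : x + 1 + 1 ≠ x) :
    ¬ NEU (prevSum n) := by
  have h₃ : x + 1 + 1 ≠ x + 1 := fun h => h₁ (add_right_cancel h)
  intro hNEU
  have key := hNEU (Equiv.swap (x + 1) (x + 1 + 1))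
    (RP.single x (x + 1) h₁.symm 1 (by norm_num)) (x + 1)
  rw [Equiv.swap_apply_left, prevSum_add_one, prevSum_add_one, RP.score_relabel,
    Equiv.symm_swap, Equiv.swap_apply_left, RP.score_single_left,
    RP.score_single_of_ne _ _ h₂ h₃] at key
  norm_num at key

theorem prevSum_not_IIM {k l : Fin n} (hkl : k ≠ l) (hk : k + 1 ≠ k) (hkl' : k + 1 ≠ l)
    (hlk : l + 1 ≠ k) : ¬ IIM (prevSum n) := by
  have hl : l + 1 ≠ l := fun h => hk (by rwa [add_eq_left] at h ⊢)
  have hij : k + 1 ≠ l + 1 := fun h => hkl (add_right_cancel h)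
  set P := RP.single k l hkl 1 (by norm_num)
  set Q := RP.single k l hkl (-1) (by norm_num)
  intro hIIM
  have key := hIIM P Q (k + 1) (l + 1) k l hk hkl' hlk hl hij hkl
    (fun _ _ => RP.single_agree_off_match _ _ _)
  simp only [prevSum_add_one, P, Q, RP.score_single_left, RP.score_single_right] at key
  norm_num at key

end prevSum

theorem prevSum_axioms (n : ℕ) [NeZero n] (hn : 4 ≤ n) :
    SYM (prevSum n) ∧ SOP (prevSum n) ∧ ¬ NEU (prevSum n) ∧ ¬ IIM (prevSum n) := by
  have h1 : 1 % n = 1 := Nat.mod_eq_of_lt (by omega)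
  have h2 : 2 % n = 2 := Nat.mod_eq_of_lt (by omega)
  have h3 : 3 % n = 3 := Nat.mod_eq_of_lt (by omega)
  refine ⟨prevSum_SYM, SOP_of_additive prevSum_add, prevSum_not_NEU (x := 0) ?_ ?_,
    prevSum_not_IIM (k := 0) (l := 2) ?_ ?_ ?_ ?_⟩ <;>
    simp [Fin.ext_iff, Fin.val_add, h1, h2, h3]
end

section
/- The scoring method f defined by f_i(R,M) = Σ_{j: m_ij > 0 counted with multiplicity m_ij} Σ_k r_{jk} (the aggregated sum of results of the opponents, i.e., f_i(R,M) = Σ_j m_{ij} · (Σ_k r_{jk})) satisfies neutrality (NEU) and symmetry (SYM), but violates strong order preservation (SOP) and independence of irrelevant matches (IIM). -/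
open Finset

/-- The aggregated sum of the results of the opponents:
`f_i = ∑_j m_{ij} · (∑_k r_{jk})`. -/
noncomputable def oppResultSum (n : ℕ) : RP n → Fin n → ℝ :=
  fun P i => ∑ j, (P.M i j : ℝ) * ∑ k, P.R j k

/-! The score of `i` is `∑ j, m i j * s j`, where `s j` is the total result of `j`: a player is
credited with its opponents' results, never its own. Neutrality and symmetry are immediate from
this formula. Both failures come from matches not involving the compared players: after a draw
between `b` and `c` plus a win of `c` over `a`, both `a` and `b` inherit the total of `c`, so the
strict lead of `a` in the second problem disappears in the sum (SOP); and with `a` playing `c`, the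
result of `c` against `d` alone decides whether `a` is ahead of `b` (IIM). -/

namespace RP

variable {n : ℕ}

def resultSum (P : RP n) (j : Fin n) : ℝ := ∑ k, P.R j k

def oppSum (P : RP n) (g : Fin n → ℝ) (i : Fin n) : ℝ := ∑ j, (P.M i j : ℝ) * g j

theorem oppResultSum_eq_oppSum (P : RP n) : oppResultSum n P = P.oppSum P.resultSum := rfl

theorem resultSum_add (P Q : RP n) : (P.add Q).resultSum = P.resultSum + Q.resultSum :=
  funext fun _ => sum_add_distrib

theorem oppSum_add (P Q : RP n) (g : Fin n → ℝ) :
    (P.add Q).oppSum g = P.oppSum g + Q.oppSum g := by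
  funext i
  simp only [oppSum, add, Nat.cast_add, add_mul, sum_add_distrib, Pi.add_apply]

theorem resultSum_relabel (σ : Equiv.Perm (Fin n)) (P : RP n) (j : Fin n) :
    (P.relabel σ).resultSum j = P.resultSum (σ.symm j) :=
  Equiv.sum_comp σ.symm (P.R (σ.symm j))

theorem oppSum_relabel (σ : Equiv.Perm (Fin n)) (P : RP n) (g : Fin n → ℝ) (i : Fin n) :
    (P.relabel σ).oppSum g (σ i) = P.oppSum (g ∘ σ) i := by
  rw [oppSum, ← Equiv.sum_comp σ]
  simp [oppSum, relabel]

def game (a b : Fin n) (r : ℝ) (hr : |r| ≤ 1) : RP n where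
  R i j := (if i = a ∧ j = b then r else 0) - (if i = b ∧ j = a then r else 0)
  M i j := (if i = a ∧ j = b then 1 else 0) + (if i = b ∧ j = a then 1 else 0)
  skew _ _ := by simp only [and_comm, neg_sub]
  symm _ _ := by simp only [and_comm, add_comm]
  bound _ _ := by split_ifs <;> norm_num [hr]

variable {a b : Fin n} {r : ℝ} {hr : |r| ≤ 1}

theorem game_resultSum (j : Fin n) :
    (game a b r hr).resultSum j = (if j = a then r else 0) - (if j = b then r else 0) := by
  simp [resultSum, game, sum_sub_distrib, ite_and]

theorem game_oppSum (g : Fin n → ℝ) (i : Fin n) :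
    (game a b r hr).oppSum g i = (if i = a then g b else 0) + (if i = b then g a else 0) := by
  simp [oppSum, game, add_mul, sum_add_distrib, ite_and]

end RP

open RP

theorem oppResultSum_NEU (n : ℕ) : NEU (oppResultSum n) := by
  intro σ P i
  have hsum : (P.relabel σ).resultSum ∘ σ = P.resultSum := by
    funext j
    simp [resultSum_relabel]
  rw [oppResultSum_eq_oppSum, oppResultSum_eq_oppSum, oppSum_relabel, hsum]

theorem oppResultSum_SYM (n : ℕ) : SYM (oppResultSum n) := by
  intro P hdraw i j
  simp [oppResultSum, hdraw]

theorem oppResultSum_not_SOP {n : ℕ} {a b c : Fin n} (hab : a ≠ b) (hac : a ≠ c) (hbc : b ≠ c) :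
    ¬ SOP (oppResultSum n) := by
  intro hSOP
  set P := game b c 0 (by norm_num)
  set Q := game c a 1 (by norm_num)
  have hP : oppResultSum n P a ≥ oppResultSum n P b := by
    simp [P, oppResultSum_eq_oppSum, game_oppSum, game_resultSum]
  have hQ : oppResultSum n Q a > oppResultSum n Q b := by
    simp [Q, oppResultSum_eq_oppSum, game_oppSum, game_resultSum, hac, hbc, hab.symm, hac.symm]
  have hPQ : oppResultSum n (P.add Q) a = oppResultSum n (P.add Q) b := by
    simp [P, Q, oppResultSum_eq_oppSum, oppSum_add, resultSum_add, game_oppSum, game_resultSum,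
      hab, hac, hbc, hab.symm, hac.symm, hbc.symm]
  exact ((hSOP P Q a b hP hQ.le).2 (Or.inr hQ)).ne' hPQ

theorem oppResultSum_not_IIM {n : ℕ} {a b c d : Fin n} (hab : a ≠ b) (hac : a ≠ c) (had : a ≠ d)
    (hbc : b ≠ c) (hbd : b ≠ d) (hcd : c ≠ d) : ¬ IIM (oppResultSum n) := by
  intro hIIM
  set P := (game a c 0 (by norm_num)).add (game c d 1 (by norm_num))
  set Q := (game a c 0 (by norm_num)).add (game c d (-1) (by norm_num))
  have hagree : ∀ x y, ¬((x = c ∧ y = d) ∨ (x = d ∧ y = c)) →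
      P.R x y = Q.R x y ∧ P.M x y = Q.M x y := by
    intro x y hxy
    obtain ⟨hxy, hyx⟩ := not_or.mp hxy
    simp [P, Q, add, game, hxy, hyx]
  have hP : oppResultSum n P a ≥ oppResultSum n P b := by
    simp [P, oppResultSum_eq_oppSum, oppSum_add, resultSum_add, game_oppSum, game_resultSum,
      hac, had, hbc, hbd, hcd, hab.symm, hac.symm]
  have hQ : oppResultSum n Q a < oppResultSum n Q b := by
    simp [Q, oppResultSum_eq_oppSum, oppSum_add, resultSum_add, game_oppSum, game_resultSum,
      hac, had, hbc, hbd, hcd, hab.symm, hac.symm]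
  exact hQ.not_ge (hIIM P Q a b c d hac had hbc hbd hab hcd hagree hP)

theorem oppResultSum_axioms (n : ℕ) (hn : 4 ≤ n) :
    NEU (oppResultSum n) ∧ SYM (oppResultSum n) ∧
      ¬ SOP (oppResultSum n) ∧ ¬ IIM (oppResultSum n) := by
  have he (x y : Fin 4) (hxy : x ≠ y) : Fin.castLE hn x ≠ Fin.castLE hn y :=
    (Fin.castLE_injective hn).ne hxy
  exact ⟨oppResultSum_NEU n, oppResultSum_SYM n,
    oppResultSum_not_SOP (he 0 1 (by decide)) (he 0 2 (by decide)) (he 1 2 (by decide)),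
    oppResultSum_not_IIM (he 0 1 (by decide)) (he 0 2 (by decide)) (he 0 3 (by decide))
      (he 1 2 (by decide)) (he 1 3 (by decide)) (he 2 3 (by decide))⟩
end

section
/- There exists no scoring method on ranking problems with 4 players that satisfies both order preservation (OP) and self-consistency (SC). -/
open Finset

/-!
Two 2-regular problems on four players carry the argument: `cycleOneWin`, the cycle 0-1-2-3-0 in
which 1 beats 0 and every other match is drawn, and `drawCycle`, the all-draw cycle 0-1-3-2-0.
Self-consistency forces `f 3 < f 2` in the first and `f 3 ≤ f 2` in the second, so order
preservation gives `f 3 < f 2` in their sum. But in the sum players 2 and 3 draw both their mutual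
matches and have the same results against 0 and 1, so matching the opponents of 3 with those of 2
by the transposition `(2 3)`, self-consistency turns `f 3 < f 2` into `f 2 < f 3`.
-/

namespace RP

variable {n : ℕ}

@[simp] lemma add_R (P Q : RP n) (i j : Fin n) : (P.add Q).R i j = P.R i j + Q.R i j := rfl

@[simp] lemma add_M (P Q : RP n) (i j : Fin n) : (P.add Q).M i j = P.M i j + Q.M i j := rfl

-- When `M a b = 0` also `R a b = 0`, so the junk value `x / 0 = 0` is harmless.
noncomputable def averageDecomp (P : RP n) : P.Decomp where
  res a b _ := P.R a b / P.M a b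
  skew a b _ := by rw [P.skew, P.symm, neg_div]
  bound a b t ht := by
    have hM : (0 : ℝ) < P.M a b := by exact_mod_cast (Nat.zero_le t).trans_lt ht
    rw [abs_div, Nat.abs_cast, div_le_one hM]
    exact P.bound a b
  sum a b := by
    rcases Nat.eq_zero_or_pos (P.M a b) with hM | hM
    · have h := P.bound a b
      rw [hM, Nat.cast_zero, abs_nonpos_iff] at h
      rw [hM, h, Finset.sum_range_zero]
    · rw [Finset.sum_const, Finset.card_range, nsmul_eq_mul,
        mul_div_cancel₀ _ (by exact_mod_cast hM.ne')]

def matchesEquiv (P : RP n) {i j : Fin n} (s : Equiv.Perm (Fin n))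
    (hM : ∀ k, P.M i k = P.M j (s k)) : P.Matches i ≃ P.Matches j :=
  Equiv.sigmaCongr s fun k => finCongr (hM k)

end RP

namespace SC

variable {n : ℕ} {f : RP n → Fin n → ℝ}

theorem of_perm (hf : SC f) (P : RP n) (i j : Fin n) (s : Equiv.Perm (Fin n))
    (hM : ∀ k, P.M i k = P.M j (s k))
    (hle : ∀ k, P.M i k ≠ 0 → P.R j (s k) ≤ P.R i k ∧ f P (s k) ≤ f P k) :
    f P j ≤ f P i ∧
      ((∃ k, P.M i k ≠ 0 ∧ (P.R j (s k) < P.R i k ∨ f P (s k) < f P k)) →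
        f P j < f P i) := by
  have hpos : ∀ k, P.M i k ≠ 0 → (0 : ℝ) < P.M j (s k) := fun k hk => by
    rw [← hM k]; exact_mod_cast Nat.pos_of_ne_zero hk
  refine hf P P.averageDecomp i j (P.matchesEquiv s hM) (fun ⟨k, t⟩ => ?_) |>.imp id ?_
  · have hk : P.M i k ≠ 0 := Nat.ne_zero_of_lt t.2
    obtain ⟨hR, hscore⟩ := hle k hk
    refine ⟨?_, hscore⟩
    change P.R j (s k) / P.M j (s k) ≤ P.R i k / P.M i k
    rw [hM k]
    exact div_le_div_of_nonneg_right hR (hpos k hk).le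
  · rintro hstrict ⟨k, hk, hlt⟩
    refine hstrict ⟨⟨k, ⟨0, Nat.pos_of_ne_zero hk⟩⟩, hlt.imp (fun hR => ?_) id⟩
    change P.R j (s k) / P.M j (s k) < P.R i k / P.M i k
    rw [hM k]
    exact div_lt_div_of_pos_right hR (hpos k hk)

theorem le_of_perm (hf : SC f) (P : RP n) (i j : Fin n) (s : Equiv.Perm (Fin n))
    (hM : ∀ k, P.M i k = P.M j (s k))
    (hle : ∀ k, P.M i k ≠ 0 → P.R j (s k) ≤ P.R i k ∧ f P (s k) ≤ f P k) :
    f P j ≤ f P i :=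
  (hf.of_perm P i j s hM hle).1

theorem lt_of_perm (hf : SC f) (P : RP n) (i j : Fin n) (s : Equiv.Perm (Fin n))
    (hM : ∀ k, P.M i k = P.M j (s k))
    (hle : ∀ k, P.M i k ≠ 0 → P.R j (s k) ≤ P.R i k ∧ f P (s k) ≤ f P k)
    (hlt : ∃ k, P.M i k ≠ 0 ∧ (P.R j (s k) < P.R i k ∨ f P (s k) < f P k)) :
    f P j < f P i :=
  (hf.of_perm P i j s hM hle).2 hlt

end SC

def cycleOneWin : RP 4 where
  R := ![![0, -1, 0, 0], ![1, 0, 0, 0], ![0, 0, 0, 0], ![0, 0, 0, 0]]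
  M := ![![0, 1, 0, 1], ![1, 0, 1, 0], ![0, 1, 0, 1], ![1, 0, 1, 0]]
  skew i j := by fin_cases i <;> fin_cases j <;> simp
  symm := by decide
  bound i j := by fin_cases i <;> fin_cases j <;> simp

def drawCycle : RP 4 where
  R _ _ := 0
  M := ![![0, 1, 1, 0], ![1, 0, 0, 1], ![1, 0, 0, 1], ![0, 1, 1, 0]]
  skew _ _ := neg_zero.symm
  symm := by decide
  bound _ _ := by simp

lemma cycleOneWin_R :
    cycleOneWin.R = ![![0, -1, 0, 0], ![1, 0, 0, 0], ![0, 0, 0, 0], ![0, 0, 0, 0]] := rfl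

lemma cycleOneWin_M :
    cycleOneWin.M = ![![0, 1, 0, 1], ![1, 0, 1, 0], ![0, 1, 0, 1], ![1, 0, 1, 0]] := rfl

lemma drawCycle_R (i j : Fin 4) : drawCycle.R i j = 0 := rfl

lemma drawCycle_M :
    drawCycle.M = ![![0, 1, 1, 0], ![1, 0, 0, 1], ![1, 0, 0, 1], ![0, 1, 1, 0]] := rfl

lemma cycleOneWin_balanced : RPBalanced cycleOneWin 2 := by unfold RPBalanced; decide

lemma drawCycle_balanced : RPBalanced drawCycle 2 := by unfold RPBalanced; decide

namespace SC

variable {f : RP 4 → Fin 4 → ℝ}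

theorem cycleOneWin_three_lt_two (hf : SC f) : f cycleOneWin 3 < f cycleOneWin 2 := by
  have h31 : f cycleOneWin 3 < f cycleOneWin 1 :=
    hf.lt_of_perm _ 1 3 1 (by decide)
      (fun k hk => by fin_cases k <;> simp [cycleOneWin_R, cycleOneWin_M] at hk ⊢)
      ⟨0, by decide, Or.inl (by simp [cycleOneWin_R])⟩
  have h02 : f cycleOneWin 0 < f cycleOneWin 2 :=
    hf.lt_of_perm _ 2 0 1 (by decide)
      (fun k hk => by fin_cases k <;> simp [cycleOneWin_R, cycleOneWin_M] at hk ⊢)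
      ⟨1, by decide, Or.inl (by simp [cycleOneWin_R])⟩
  by_contra! h23
  have h32 := hf.lt_of_perm cycleOneWin 2 3 (Equiv.swap 0 1 * Equiv.swap 2 3) (by decide)
    (fun k hk => by
      fin_cases k <;> simp [cycleOneWin_R, cycleOneWin_M, Equiv.swap_apply_def] at hk ⊢ <;>
        linarith)
    ⟨1, by decide, Or.inr (by simp [Equiv.swap_apply_def]; linarith)⟩
  linarith

theorem drawCycle_three_le_two (hf : SC f) : f drawCycle 3 ≤ f drawCycle 2 := by
  have h30 : f drawCycle 3 ≤ f drawCycle 0 :=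
    hf.le_of_perm _ 0 3 1 (by decide) (fun k _ => by simp [drawCycle_R])
  have h12 : f drawCycle 1 ≤ f drawCycle 2 :=
    hf.le_of_perm _ 2 1 1 (by decide) (fun k _ => by simp [drawCycle_R])
  by_contra! h23
  have h32 := hf.lt_of_perm drawCycle 2 3 (Equiv.swap 0 1 * Equiv.swap 2 3) (by decide)
    (fun k hk => by
      fin_cases k <;> simp [drawCycle_R, drawCycle_M, Equiv.swap_apply_def] at hk ⊢ <;> linarith)
    ⟨0, by decide, Or.inr (by simp [Equiv.swap_apply_def]; linarith)⟩
  linarith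

theorem cycleOneWin_add_drawCycle_two_le_three (hf : SC f) :
    f (cycleOneWin.add drawCycle) 2 ≤ f (cycleOneWin.add drawCycle) 3 := by
  by_contra! h32
  have h23 := hf.lt_of_perm (cycleOneWin.add drawCycle) 3 2 (Equiv.swap 2 3) (by decide)
    (fun k hk => by
      fin_cases k <;> simp [cycleOneWin_R, cycleOneWin_M, drawCycle_R, drawCycle_M,
        Equiv.swap_apply_def] at hk ⊢
      exact h32.le)
    ⟨2, by decide, Or.inr (by simpa using h32)⟩
  linarith

end SC

theorem no_op_and_sc : ¬ ∃ f : RP 4 → Fin 4 → ℝ, OP f ∧ SC f := by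
  rintro ⟨f, hOP, hSC⟩
  have hP := hSC.cycleOneWin_three_lt_two
  have hQ := hSC.drawCycle_three_le_two
  have hsum := (hOP _ _ 2 2 cycleOneWin_balanced drawCycle_balanced 2 3 hP.le hQ).2 (Or.inl hP)
  exact hSC.cycleOneWin_add_drawCycle_two_le_three.not_gt hsum
end

section
/- Let (R',M') be the 4-player ranking problem where X_3 defeated X_1, X_3 defeated X_2, X_1 drew with X_4, and X_2 drew with X_4 (one match each). Any self-consistent scoring method f satisfies f_1(R',M') = f_2(R',M') and f_3(R',M') > f_4(R',M'). -/
open Finset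

/-- X₃ beat X₁ and X₂; X₄ drew with X₁ and X₂ (one match each). -/
def P11 : RP 4 where
  R := fun i j => ![![0,0,-1,0],![0,0,-1,0],![1,1,0,0],![0,0,0,0]] i j
  M := fun i j => ![![0,0,1,1],![0,0,1,1],![1,1,0,0],![1,1,0,0]] i j
  skew := by intro i j; fin_cases i <;> fin_cases j <;> norm_num
  symm := by decide
  bound := by intro i j; fin_cases i <;> fin_cases j <;> norm_num

namespace RP

variable {n : ℕ} (P : RP n)

theorem R_eq_zero_of_M_eq_zero {a b : Fin n} (h : P.M a b = 0) : P.R a b = 0 :=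
  abs_nonpos_iff.mp (by simpa [h] using P.bound a b)

def decompOfMLeOne (hP : ∀ a b, P.M a b ≤ 1) : P.Decomp where
  res a b _ := P.R a b
  skew a b _ := P.skew a b
  bound a b _ _ := (P.bound a b).trans (by exact_mod_cast hP a b)
  sum a b := by
    rcases Nat.le_one_iff_eq_zero_or_eq_one.mp (hP a b) with h | h
    · simp [h, P.R_eq_zero_of_M_eq_zero h]
    · simp [h]

def matchesEquivOfRowEq {i j : Fin n} (h : ∀ k, P.M i k = P.M j k) :
    P.Matches i ≃ P.Matches j :=
  Equiv.sigmaCongrRight fun k => finCongr (h k)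

end RP

section SelfConsistency

variable {n : ℕ} {f : RP n → Fin n → ℝ} {P : RP n} {i j : Fin n}

theorem SC.score_le_of_results_le (hf : SC f) (hP : ∀ a b, P.M a b ≤ 1)
    (hM : ∀ k, P.M i k = P.M j k) (hR : ∀ k, P.R j k ≤ P.R i k) :
    f P j ≤ f P i :=
  (hf P (P.decompOfMLeOne hP) i j (P.matchesEquivOfRowEq hM) fun m => ⟨hR m.1, le_rfl⟩).1

theorem SC.score_lt_of_results_lt (hf : SC f) (hP : ∀ a b, P.M a b ≤ 1)
    (hM : ∀ k, P.M i k = P.M j k) (hR : ∀ k, P.R j k ≤ P.R i k) {k : Fin n}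
    (hk : P.R j k < P.R i k) :
    f P j < f P i := by
  have hpos : 0 < P.M i k := by
    by_contra! h0
    have hi := P.R_eq_zero_of_M_eq_zero (Nat.le_zero.mp h0)
    have hj := P.R_eq_zero_of_M_eq_zero ((hM k).symm.trans (Nat.le_zero.mp h0))
    exact hk.ne (hj.trans hi.symm)
  exact (hf P (P.decompOfMLeOne hP) i j (P.matchesEquivOfRowEq hM)
    fun m => ⟨hR m.1, le_rfl⟩).2 ⟨⟨k, 0, hpos⟩, Or.inl hk⟩

end SelfConsistency

theorem sc_on_P11 (f : RP 4 → Fin 4 → ℝ) (hSC : SC f) :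
    f P11 0 = f P11 1 ∧ f P11 2 > f P11 3 := by
  have hM : ∀ a b, P11.M a b ≤ 1 := by decide
  have hM01 : ∀ k, P11.M 0 k = P11.M 1 k := by decide
  have hM23 : ∀ k, P11.M 2 k = P11.M 3 k := by decide
  have hR01 : ∀ k, P11.R 0 k = P11.R 1 k := by intro k; fin_cases k <;> rfl
  have hR23 : ∀ k, P11.R 3 k ≤ P11.R 2 k := by intro k; fin_cases k <;> simp [P11]
  have hR23_strict : P11.R 3 0 < P11.R 2 0 := by simp [P11]
  refine ⟨le_antisymm ?_ ?_, hSC.score_lt_of_results_lt hM hM23 hR23 hR23_strict⟩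
  · exact hSC.score_le_of_results_le hM (fun k => (hM01 k).symm) fun k => (hR01 k).le
  · exact hSC.score_le_of_results_le hM hM01 fun k => (hR01 k).ge
end
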